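/- arXiv:2301.13392 — 3 statements merged into one kernel-verified Lean document; each statement's English description precedes it below -/
import Mathlib

section
/- Let f : ℝ → ℝ be twice differentiable with continuous second derivative, and suppose there are constants L₁, L₂ > 0 with 0 < f′(x) ≤ L₁ and f″(x) ≤ L₂ for all x ∈ ℝ. Then for all reals a ≤ b there exists h : ℝ → ℝ, twice differentiable with continuous second derivative, such that: h(x) = f(x) for all x ∈ [a, b]; 0 < h′(x) ≤ L₁ and h″(x) ≤ L₂ for all x ∈ ℝ; h(x) → +∞ as x → +∞ and h(x) → −∞ as x → −∞. In particular, the range of h is all of ℝ. -/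
/-!
Extend `f` beyond `[a, b]` by exponential tails. At an endpoint `x₀`, with `p₀ = f' x₀` and
`v = f'' x₀`, the tail `expTail x₀ (f x₀) p₀ v μ` agrees with `f` to second order. On its side of
`x₀` (where `μ (x - x₀) ≤ 0`) its derivative is a convex combination of `p₀` and the asymptotic
slope `p₀ - v / μ`, and its second derivative `v e^{μ (x - x₀)}` lies between `0` and `v`.
For `|μ|` large the asymptotic slope lies in `(0, L₁]` (if `p₀ = L₁`, then `f'` is maximal at `x₀`,
so `v = 0`); hence the glued function keeps both derivative bounds and grows linearly to `±∞`.
-/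

open Filter Set Real Topology

structure HasC2Derivs (F F' F'' : ℝ → ℝ) : Prop where
  hasDerivAt : ∀ x, HasDerivAt F (F' x) x
  hasDerivAt_deriv : ∀ x, HasDerivAt F' (F'' x) x
  continuous : Continuous F''

namespace HasC2Derivs

variable {F F' F'' : ℝ → ℝ}

theorem _root_.ContDiff.hasC2Derivs {f : ℝ → ℝ} (hf : ContDiff ℝ 2 f) :
    HasC2Derivs f (deriv f) (deriv (deriv f)) := by
  obtain ⟨hdf, -, hf'⟩ := (contDiff_succ_iff_deriv (n := 1)).mp hf
  obtain ⟨hdf', hcont⟩ := contDiff_one_iff_deriv.mp hf'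
  exact ⟨fun x => (hdf x).hasDerivAt, fun x => (hdf' x).hasDerivAt, hcont⟩

theorem deriv_eq (hF : HasC2Derivs F F' F'') : deriv F = F' :=
  funext fun x => (hF.hasDerivAt x).deriv

theorem deriv_deriv_eq (hF : HasC2Derivs F F' F'') : deriv (deriv F) = F'' := by
  rw [hF.deriv_eq]
  exact funext fun x => (hF.hasDerivAt_deriv x).deriv

theorem contDiff (hF : HasC2Derivs F F' F'') : ContDiff ℝ 2 F := by
  refine (contDiff_succ_iff_deriv (n := 1)).mpr
    ⟨fun x => (hF.hasDerivAt x).differentiableAt, by simp, ?_⟩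
  rw [hF.deriv_eq]
  refine contDiff_one_iff_deriv.mpr ⟨fun x => (hF.hasDerivAt_deriv x).differentiableAt, ?_⟩
  rw [← hF.deriv_eq, hF.deriv_deriv_eq]
  exact hF.continuous

end HasC2Derivs

noncomputable def glueAt (c : ℝ) (F G : ℝ → ℝ) (x : ℝ) : ℝ := if x ≤ c then F x else G x

theorem glueAt_of_le {c x : ℝ} (F G : ℝ → ℝ) (hx : x ≤ c) : glueAt c F G x = F x := if_pos hx

theorem glueAt_of_lt {c x : ℝ} (F G : ℝ → ℝ) (hx : c < x) : glueAt c F G x = G x :=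
  if_neg hx.not_ge

theorem glueAt_of_le_of_eq {c x : ℝ} {F G : ℝ → ℝ} (h₀ : F c = G c) (hx : c ≤ x) :
    glueAt c F G x = G x := by
  rcases hx.eq_or_lt with rfl | hx
  · rw [glueAt_of_le _ _ le_rfl, h₀]
  · exact glueAt_of_lt _ _ hx

theorem glueAt_mem {c : ℝ} {F G : ℝ → ℝ} {S : Set ℝ} (hF : ∀ x ≤ c, F x ∈ S)
    (hG : ∀ x, c < x → G x ∈ S) (x : ℝ) : glueAt c F G x ∈ S := by
  rcases le_or_gt x c with hx | hx
  · exact glueAt_of_le F G hx ▸ hF x hx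
  · exact glueAt_of_lt F G hx ▸ hG x hx

theorem hasDerivAt_glueAt {c : ℝ} {F G F' G' : ℝ → ℝ} (hF : ∀ x, HasDerivAt F (F' x) x)
    (hG : ∀ x, HasDerivAt G (G' x) x) (h₀ : F c = G c) (h₁ : F' c = G' c) (x : ℝ) :
    HasDerivAt (glueAt c F G) (glueAt c F' G' x) x := by
  rcases lt_trichotomy x c with hx | rfl | hx
  · rw [glueAt_of_le _ _ hx.le]
    refine (hF x).congr_of_eventuallyEq ?_
    filter_upwards [Iio_mem_nhds hx] with y hy using glueAt_of_le _ _ (le_of_lt hy)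
  · rw [glueAt_of_le _ _ le_rfl, ← hasDerivWithinAt_univ, ← Iic_union_Ici]
    refine ((hF x).hasDerivWithinAt.congr (fun y hy => glueAt_of_le _ _ hy)
      (glueAt_of_le _ _ le_rfl)).union ?_
    rw [h₁]
    exact (hG x).hasDerivWithinAt.congr (fun y hy => glueAt_of_le_of_eq h₀ hy)
      (glueAt_of_le_of_eq h₀ le_rfl)
  · rw [glueAt_of_lt _ _ hx]
    refine (hG x).congr_of_eventuallyEq ?_
    filter_upwards [Ioi_mem_nhds hx] with y hy using glueAt_of_lt _ _ hy

theorem HasC2Derivs.glueAt {c : ℝ} {F F' F'' G G' G'' : ℝ → ℝ} (hF : HasC2Derivs F F' F'')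
    (hG : HasC2Derivs G G' G'') (h₀ : F c = G c) (h₁ : F' c = G' c) (h₂ : F'' c = G'' c) :
    HasC2Derivs (glueAt c F G) (glueAt c F' G') (glueAt c F'' G'') where
  hasDerivAt := hasDerivAt_glueAt hF.hasDerivAt hG.hasDerivAt h₀ h₁
  hasDerivAt_deriv := hasDerivAt_glueAt hF.hasDerivAt_deriv hG.hasDerivAt_deriv h₁ h₂
  continuous := hF.continuous.if_le hG.continuous continuous_id continuous_const
    fun x (hx : x = c) => hx ▸ h₂

noncomputable def expTail (x₀ y₀ p₀ v μ x : ℝ) : ℝ :=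
  y₀ + (p₀ - v / μ) * (x - x₀) + v / μ ^ 2 * (exp (μ * (x - x₀)) - 1)

theorem hasC2Derivs_expTail (x₀ y₀ p₀ v : ℝ) {μ : ℝ} (hμ : μ ≠ 0) :
    HasC2Derivs (expTail x₀ y₀ p₀ v μ) (fun x => p₀ - v / μ + v / μ * exp (μ * (x - x₀)))
      (fun x => v * exp (μ * (x - x₀))) := by
  have hexp : ∀ x, HasDerivAt (fun x => exp (μ * (x - x₀))) (exp (μ * (x - x₀)) * μ) x :=
    fun x => (((hasDerivAt_id x).sub_const x₀).const_mul μ).exp.congr_deriv (by simp)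
  refine ⟨fun x => ?_, fun x => ?_, by fun_prop⟩
  · exact ((((hasDerivAt_id x).sub_const x₀).const_mul (p₀ - v / μ)).const_add y₀).add
      (((hexp x).sub_const 1).const_mul (v / μ ^ 2)) |>.congr_deriv (by field_simp)
  · exact ((hexp x).const_mul (v / μ)).const_add (p₀ - v / μ) |>.congr_deriv (by field_simp)

section expTail

variable {x₀ y₀ p₀ v μ : ℝ}

@[simp]
theorem expTail_self : expTail x₀ y₀ p₀ v μ x₀ = y₀ := by
  simp [expTail]

theorem expTail_deriv_mem {S : Set ℝ} (hS : Convex ℝ S) (hp₀ : p₀ ∈ S) (hc : p₀ - v / μ ∈ S)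
    {x : ℝ} (hx : μ * (x - x₀) ≤ 0) : p₀ - v / μ + v / μ * exp (μ * (x - x₀)) ∈ S := by
  have hs₀ := (exp_pos (μ * (x - x₀))).le
  have hs₁ := exp_le_one_iff.mpr hx
  convert hS hc hp₀ (sub_nonneg.mpr hs₁) hs₀ (sub_add_cancel 1 _) using 1
  simp only [smul_eq_mul]
  ring

theorem expTail_deriv_deriv_le {x : ℝ} (hx : μ * (x - x₀) ≤ 0) :
    v * exp (μ * (x - x₀)) ≤ max v 0 := by
  have hs₀ := (exp_pos (μ * (x - x₀))).le
  have hs₁ := exp_le_one_iff.mpr hx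
  rcases le_total v 0 with hv | hv
  · exact (mul_nonpos_of_nonpos_of_nonneg hv hs₀).trans (le_max_right v 0)
  · exact (mul_le_of_le_one_right hv hs₁).trans (le_max_left v 0)

theorem expTail_eq_linear_add : expTail x₀ y₀ p₀ v μ = fun x =>
    (p₀ - v / μ) * x + (y₀ - (p₀ - v / μ) * x₀ + v / μ ^ 2 * (exp (μ * (x - x₀)) - 1)) := by
  ext x; rw [expTail]; ring

theorem tendsto_expTail_atTop (hμ : μ < 0) (hc : 0 < p₀ - v / μ) :
    Tendsto (expTail x₀ y₀ p₀ v μ) atTop atTop := by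
  have hexp : Tendsto (fun x => exp (μ * (x - x₀))) atTop (𝓝 0) :=
    tendsto_exp_atBot.comp
      ((tendsto_atTop_add_const_right _ (-x₀) tendsto_id).const_mul_atTop_of_neg hμ)
  rw [expTail_eq_linear_add]
  exact (tendsto_id.const_mul_atTop hc).atTop_add (((hexp.sub_const 1).const_mul _).const_add _)

theorem tendsto_expTail_atBot (hμ : 0 < μ) (hc : 0 < p₀ - v / μ) :
    Tendsto (expTail x₀ y₀ p₀ v μ) atBot atBot := by
  have hexp : Tendsto (fun x => exp (μ * (x - x₀))) atBot (𝓝 0) :=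
    tendsto_exp_atBot.comp
      ((tendsto_atBot_add_const_right _ (-x₀) tendsto_id).const_mul_atBot hμ)
  rw [expTail_eq_linear_add]
  exact (tendsto_id.const_mul_atBot hc).atBot_add (((hexp.sub_const 1).const_mul _).const_add _)

end expTail

theorem eventually_deriv_sub_div_mem_Ioc {f : ℝ → ℝ} {L : ℝ} (hder : ∀ x, deriv f x ∈ Ioc 0 L)
    (x₀ : ℝ) {l : Filter ℝ} (hl : Tendsto (·⁻¹) l (𝓝 0)) :
    ∀ᶠ μ in l, deriv f x₀ - deriv (deriv f) x₀ / μ ∈ Ioc 0 L := by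
  have ht : Tendsto (fun μ => deriv f x₀ - deriv (deriv f) x₀ / μ) l (𝓝 (deriv f x₀)) := by
    simpa [div_eq_mul_inv] using (hl.const_mul (deriv (deriv f) x₀)).const_sub (deriv f x₀)
  rcases (hder x₀).2.lt_or_eq with hlt | hmax
  · exact (ht.eventually (Ioo_mem_nhds (hder x₀).1 hlt)).mono fun _ h => Ioo_subset_Ioc_self h
  · have hcrit : deriv (deriv f) x₀ = 0 :=
      IsLocalMax.deriv_eq_zero (Eventually.of_forall fun y => hmax ▸ (hder y).2)
    simp [hcrit, hder x₀]

theorem link_function_full_conversion_general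
    (f : ℝ → ℝ) (hf : ContDiff ℝ 2 f)
    (L₁ L₂ : ℝ) (hL₂ : 0 < L₂)
    (hder : ∀ x : ℝ, 0 < deriv f x ∧ deriv f x ≤ L₁)
    (hder2 : ∀ x : ℝ, deriv (deriv f) x ≤ L₂)
    (a b : ℝ) (hab : a ≤ b) :
    ∃ h : ℝ → ℝ, ContDiff ℝ 2 h ∧
      (∀ x ∈ Set.Icc a b, h x = f x) ∧
      (∀ x : ℝ, 0 < deriv h x ∧ deriv h x ≤ L₁) ∧
      (∀ x : ℝ, deriv (deriv h) x ≤ L₂) ∧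
      Filter.Tendsto h Filter.atTop Filter.atTop ∧
      Filter.Tendsto h Filter.atBot Filter.atBot ∧
      Set.range h = Set.univ := by
  obtain ⟨μa, hμa, hμa₀⟩ := ((eventually_deriv_sub_div_mem_Ioc hder a
    tendsto_inv_atTop_zero).and (eventually_gt_atTop 0)).exists
  obtain ⟨μb, hμb, hμb₀⟩ := ((eventually_deriv_sub_div_mem_Ioc hder b
    tendsto_inv_atBot_zero).and (eventually_lt_atBot 0)).exists
  have hC2b := hf.hasC2Derivs.glueAt (c := b)
    (hasC2Derivs_expTail b (f b) (deriv f b) (deriv (deriv f) b) hμb₀.ne)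
    (by simp) (by simp) (by simp)
  have hC2 := (hasC2Derivs_expTail a (f a) (deriv f a) (deriv (deriv f) a) hμa₀.ne').glueAt
    (c := a) hC2b (by simp [glueAt_of_le _ _ hab]) (by simp [glueAt_of_le _ _ hab])
    (by simp [glueAt_of_le _ _ hab])
  have hsign_a : ∀ y ≤ a, μa * (y - a) ≤ 0 := fun y hy =>
    mul_nonpos_of_nonneg_of_nonpos hμa₀.le (sub_nonpos.2 hy)
  have hsign_b : ∀ y, b < y → μb * (y - b) ≤ 0 := fun y hy =>
    mul_nonpos_of_nonpos_of_nonneg hμb₀.le (sub_nonneg.2 hy.le)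
  refine ⟨_, hC2.contDiff, fun x hx => ?_, fun x => ?_, fun x => ?_, ?top, ?bot,
    range_eq_univ.mpr (hC2.contDiff.continuous.surjective ?top ?bot)⟩
  · rw [glueAt_of_le_of_eq (by simp [glueAt_of_le _ _ hab]) hx.1, glueAt_of_le _ _ hx.2]
  · rw [hC2.deriv_eq]
    exact glueAt_mem (fun y hy => expTail_deriv_mem (convex_Ioc 0 L₁) (hder a) hμa (hsign_a y hy))
      (fun z _ => glueAt_mem (fun y _ => hder y)
        (fun y hy => expTail_deriv_mem (convex_Ioc 0 L₁) (hder b) hμb (hsign_b y hy)) z) x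
  · rw [hC2.deriv_deriv_eq]
    exact glueAt_mem (S := Iic L₂)
      (fun y hy => (expTail_deriv_deriv_le (hsign_a y hy)).trans (max_le (hder2 a) hL₂.le))
      (fun z _ => glueAt_mem (fun y _ => hder2 y)
        (fun y hy => (expTail_deriv_deriv_le (hsign_b y hy)).trans (max_le (hder2 b) hL₂.le)) z) x
  · refine (tendsto_expTail_atTop (x₀ := b) (y₀ := f b) hμb₀ hμb.1).congr' ?_
    filter_upwards [eventually_gt_atTop b] with x hx
    rw [glueAt_of_lt _ _ (hab.trans_lt hx), glueAt_of_lt _ _ hx]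
  · refine (tendsto_expTail_atBot (x₀ := a) (y₀ := f a) hμa₀ hμa.1).congr' ?_
    filter_upwards [eventually_le_atBot a] with x hx
    rw [glueAt_of_le _ _ hx]

/-- Combined conversion of Appendix A: any C² link function with `0 < f' ≤ L₁`
and `f'' ≤ L₂` can be replaced by one agreeing with `f` on `[a, b]`, with the
same derivative bounds, tending to `+∞` at `+∞` and to `-∞` at `-∞`; in
particular its range is all of ℝ. -/
theorem link_function_full_conversion
    (f : ℝ → ℝ) (hf : ContDiff ℝ 2 f)
    (L₁ L₂ : ℝ) (hL₁ : 0 < L₁) (hL₂ : 0 < L₂)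
    (hder : ∀ x : ℝ, 0 < deriv f x ∧ deriv f x ≤ L₁)
    (hder2 : ∀ x : ℝ, deriv (deriv f) x ≤ L₂)
    (a b : ℝ) (hab : a ≤ b) :
    ∃ h : ℝ → ℝ, ContDiff ℝ 2 h ∧
      (∀ x ∈ Set.Icc a b, h x = f x) ∧
      (∀ x : ℝ, 0 < deriv h x ∧ deriv h x ≤ L₁) ∧
      (∀ x : ℝ, deriv (deriv h) x ≤ L₂) ∧
      Filter.Tendsto h Filter.atTop Filter.atTop ∧
      Filter.Tendsto h Filter.atBot Filter.atBot ∧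
      Set.range h = Set.univ :=
  link_function_full_conversion_general f hf L₁ L₂ hL₂ hder hder2 a b hab
end

section
/- Let p, T be positive integers and let W₁, …, W_T ∈ ℝ^p. Define real p×p matrices by M₀ = I_p (the identity) and M_t = M_{t−1} + W_t W_tᵀ for 1 ≤ t ≤ T. Then every M_t is symmetric positive definite, and ∑_{t=1}^T log(1 + W_tᵀ M_{t−1}^{−1} W_t) = log (det M_T). -/
/-!
Adding the rank-one term `w wᵀ` to a positive definite `M` keeps it positive definite and, by the
matrix determinant lemma, multiplies the determinant by `1 + wᵀ M⁻¹ w > 0`. Taking logarithms,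
each summand is the increment `log det M_t - log det M_{t-1}`, and the sum telescopes to
`log det M_T - log det I`.
-/

open Matrix

namespace Matrix

variable {n : Type*} [Fintype n]

theorem det_add_vecMulVec [DecidableEq n] {α : Type*} [CommRing α] {A : Matrix n n α}
    (hA : IsUnit A.det) (u v : n → α) :
    (A + vecMulVec u v).det = A.det * (1 + v ⬝ᵥ A⁻¹ *ᵥ u) := by
  rw [vecMulVec_eq Unit, det_add_replicateCol_mul_replicateRow hA, Matrix.mul_assoc,
    ← replicateCol_mulVec]
  congr 1
  rw [det_unique]
  rfl

theorem PosDef.add_vecMulVec_self {M : Matrix n n ℝ} (hM : M.PosDef) (v : n → ℝ) :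
    (M + vecMulVec v v).PosDef := by
  simpa using hM.add_posSemidef (posSemidef_vecMulVec_self_star v)

theorem PosDef.log_det_add_vecMulVec_self [DecidableEq n] {M : Matrix n n ℝ} (hM : M.PosDef)
    (v : n → ℝ) :
    Real.log (M + vecMulVec v v).det = Real.log M.det + Real.log (1 + v ⬝ᵥ M⁻¹ *ᵥ v) := by
  have hquad : 0 ≤ v ⬝ᵥ M⁻¹ *ᵥ v := by
    simpa using hM.inv.posSemidef.dotProduct_mulVec_nonneg v
  rw [det_add_vecMulVec (isUnit_iff_ne_zero.2 hM.det_pos.ne'),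
    Real.log_mul hM.det_pos.ne' (by positivity)]

end Matrix

theorem posDef_and_sum_log_eq_log_det_sub {n : Type*} [Fintype n] [DecidableEq n] (T : ℕ)
    (W : ℕ → n → ℝ) (M : ℕ → Matrix n n ℝ) (hM0 : (M 0).PosDef)
    (hMrec : ∀ t, 1 ≤ t → t ≤ T → M t = M (t - 1) + vecMulVec (W t) (W t)) :
    ∀ t ≤ T, (M t).PosDef ∧
      ∑ s ∈ Finset.Icc 1 t, Real.log (1 + W s ⬝ᵥ (M (s - 1))⁻¹ *ᵥ W s) =
        Real.log (M t).det - Real.log (M 0).det := by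
  intro t ht
  induction t with
  | zero => simp [hM0]
  | succ t ih =>
    obtain ⟨hpd, hsum⟩ := ih (by omega)
    have hstep : M (t + 1) = M t + vecMulVec (W (t + 1)) (W (t + 1)) :=
      hMrec (t + 1) (by omega) ht
    refine ⟨hstep ▸ hpd.add_vecMulVec_self _, ?_⟩
    rw [Finset.sum_Icc_succ_top (by omega), hsum, Nat.add_sub_cancel, hstep,
      hpd.log_det_add_vecMulVec_self]
    ring

theorem telescoping_determinant_identity_general
    (p T : ℕ)
    (W : ℕ → Fin p → ℝ)
    (M : ℕ → Matrix (Fin p) (Fin p) ℝ)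
    (hM0 : M 0 = 1)
    (hMrec : ∀ t, 1 ≤ t → t ≤ T → M t = M (t - 1) + Matrix.vecMulVec (W t) (W t)) :
    (∀ t ≤ T, (M t).PosDef) ∧
    ∑ t ∈ Finset.Icc 1 T, Real.log (1 + W t ⬝ᵥ ((M (t - 1))⁻¹ *ᵥ W t)) =
      Real.log (M T).det := by
  have key := posDef_and_sum_log_eq_log_det_sub T W M (hM0 ▸ PosDef.one) hMrec
  refine ⟨fun t ht => (key t ht).1, ?_⟩
  rw [(key T le_rfl).2, hM0, det_one, Real.log_one, sub_zero]

/-- Telescoping determinant identity of the elliptical potential argument: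
with `M₀ = I` and `M_t = M_{t-1} + W_t W_tᵀ`, every `M_t` is (symmetric)
positive definite and `∑_{t=1}^T log(1 + W_tᵀ M_{t-1}⁻¹ W_t) = log det M_T`. -/
theorem telescoping_determinant_identity
    (p T : ℕ) (hp : 0 < p) (hT : 0 < T)
    (W : ℕ → Fin p → ℝ)
    (M : ℕ → Matrix (Fin p) (Fin p) ℝ)
    (hM0 : M 0 = 1)
    (hMrec : ∀ t, 1 ≤ t → t ≤ T → M t = M (t - 1) + Matrix.vecMulVec (W t) (W t)) :
    (∀ t ≤ T, (M t).PosDef) ∧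
    ∑ t ∈ Finset.Icc 1 T, Real.log (1 + W t ⬝ᵥ ((M (t - 1))⁻¹ *ᵥ W t)) =
      Real.log (M T).det :=
  telescoping_determinant_identity_general p T W M hM0 hMrec
end

section
/- Fix an integer n ≥ 1, a weight matrix θ, a set S ⊆ {0,…,n−1} of intervened nodes, a set K ⊆ {0,…,n−1}² of kept edges, and a real r ≥ 0 such that θ(j,i) ≤ r whenever (j,i) ∉ K. Let θ′ be any weight matrix with θ′(j,i) = 0 whenever (j,i) ∉ K and |θ′(j,i) − θ(j,i)| ≤ n·r for all (j,i) ∈ K. Then for every node i ∈ {0,…,n−1}, |μ[θ,S](i) − μ[θ′,S](i)| ≤ n²·(n+1)·r. -/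
/-!
Weights differ by at most `n r` everywhere: on `K` by assumption, off `K` because there `θ' = 0`
and `θ ≤ r`. Since the columns of `θ` sum to at most `1` and the means of `θ'` lie in `[0,1]`,
the error at node `i` is at most the largest earlier error plus `i · n r`, hence at most
`i² · n r ≤ n² (n+1) r` by induction, as `(i-1)² + i ≤ i²`.
-/

open Finset

/-- `m` satisfies the strong recursion defining `μ[θ,S]`. -/
def IsInterventionalMean (θ : ℕ → ℕ → ℝ) (S : Finset ℕ) (m : ℕ → ℝ) : Prop :=
  ∀ i, m i = if i = 0 ∨ i ∈ S then 1 else ∑ j ∈ range i, θ j i * m j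

lemma sum_range_le_one_of_le {n i : ℕ} {θ : ℕ → ℕ → ℝ} (hθ0 : ∀ j i, 0 ≤ θ j i)
    (hθsum : ∀ i, ∑ j ∈ range n, θ j i ≤ 1) (hi : i ≤ n) :
    ∑ j ∈ range i, θ j i ≤ 1 :=
  (sum_le_sum_of_subset_of_nonneg (range_subset_range.mpr hi) fun j _ _ => hθ0 j i).trans
    (hθsum i)

lemma abs_sum_mul_le_of_abs_le {ι : Type*} {s : Finset ι} {w x : ι → ℝ} {B : ℝ}
    (hw0 : ∀ j ∈ s, 0 ≤ w j) (hw1 : ∑ j ∈ s, w j ≤ 1) (hB : 0 ≤ B)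
    (hx : ∀ j ∈ s, |x j| ≤ B) : |∑ j ∈ s, w j * x j| ≤ B :=
  calc |∑ j ∈ s, w j * x j| ≤ ∑ j ∈ s, w j * B := by
        refine (abs_sum_le_sum_abs _ _).trans (sum_le_sum fun j hj => ?_)
        rw [abs_mul, abs_of_nonneg (hw0 j hj)]
        exact mul_le_mul_of_nonneg_left (hx j hj) (hw0 j hj)
    _ = (∑ j ∈ s, w j) * B := (sum_mul _ _ _).symm
    _ ≤ B := mul_le_of_le_one_left hB hw1

namespace IsInterventionalMean

variable {n : ℕ} {θ θ' : ℕ → ℕ → ℝ} {S : Finset ℕ} {m m' : ℕ → ℝ}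

lemma mem_Icc (hθ0 : ∀ j i, 0 ≤ θ j i) (hθsum : ∀ i, ∑ j ∈ range n, θ j i ≤ 1)
    (hm : IsInterventionalMean θ S m) : ∀ i < n, m i ∈ Set.Icc 0 1 := by
  intro i
  induction i using Nat.strong_induction_on with
  | _ i ih =>
    intro hi
    have hprev : ∀ j ∈ range i, m j ∈ Set.Icc 0 1 := fun j hj =>
      ih j (mem_range.mp hj) ((mem_range.mp hj).trans hi)
    rw [hm i]
    split_ifs
    · simp
    · refine ⟨sum_nonneg fun j hj => mul_nonneg (hθ0 j i) (hprev j hj).1, ?_⟩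
      have h := abs_sum_mul_le_of_abs_le (fun j _ => hθ0 j i)
        (sum_range_le_one_of_le hθ0 hθsum hi.le) zero_le_one
        (fun j hj => abs_le.mpr ⟨by linarith [(hprev j hj).1], (hprev j hj).2⟩)
      exact (le_abs_self _).trans h

lemma abs_sub_le (hθ0 : ∀ j i, 0 ≤ θ j i) (hθsum : ∀ i, ∑ j ∈ range n, θ j i ≤ 1)
    (hm : IsInterventionalMean θ S m) (hm' : IsInterventionalMean θ' S m')
    (hm'01 : ∀ i < n, m' i ∈ Set.Icc 0 1) {ε : ℝ} (hε0 : 0 ≤ ε)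
    (hε : ∀ j i, j < i → i < n → |θ j i - θ' j i| ≤ ε) :
    ∀ i < n, |m i - m' i| ≤ i ^ 2 * ε := by
  intro i
  induction i using Nat.strong_induction_on with
  | _ i ih =>
    intro hi
    rw [hm i, hm' i]
    split_ifs with hroot
    · simp only [sub_self, abs_zero]
      positivity
    have hi1 : (1 : ℝ) ≤ i := by exact_mod_cast Nat.one_le_iff_ne_zero.mpr (not_or.mp hroot).1
    have inherited : |∑ j ∈ range i, θ j i * (m j - m' j)| ≤ (i - 1) ^ 2 * ε := by
      refine abs_sum_mul_le_of_abs_le (fun j _ => hθ0 j i)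
        (sum_range_le_one_of_le hθ0 hθsum hi.le) (by positivity) fun j hj => ?_
      have hji := mem_range.mp hj
      have hj : (j : ℝ) ≤ i - 1 := by
        rw [le_sub_iff_add_le]; exact_mod_cast hji
      exact (ih j hji (hji.trans hi)).trans (by gcongr)
    have fresh : |∑ j ∈ range i, (θ j i - θ' j i) * m' j| ≤ i * ε := by
      refine (abs_sum_le_sum_abs _ _).trans ?_
      calc ∑ j ∈ range i, |(θ j i - θ' j i) * m' j| ≤ ∑ _j ∈ range i, ε := by
            refine sum_le_sum fun j hj => ?_
            have hji := mem_range.mp hj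
            have hm'j := hm'01 j (hji.trans hi)
            rw [abs_mul, abs_of_nonneg hm'j.1]
            exact (mul_le_of_le_one_right (abs_nonneg _) hm'j.2).trans (hε j i hji hi)
        _ = i * ε := by simp
    calc |∑ j ∈ range i, θ j i * m j - ∑ j ∈ range i, θ' j i * m' j|
        = |∑ j ∈ range i, θ j i * (m j - m' j) + ∑ j ∈ range i, (θ j i - θ' j i) * m' j| := by
          rw [← sum_add_distrib, ← sum_sub_distrib]
          congr 1
          exact sum_congr rfl fun j _ => by ring
      _ ≤ (i - 1) ^ 2 * ε + i * ε := (abs_add_le _ _).trans (add_le_add inherited fresh)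
      _ ≤ i ^ 2 * ε := by nlinarith

end IsInterventionalMean

theorem blm_estimated_model_reward_close_general
    (n : ℕ)
    (θ : ℕ → ℕ → ℝ)
    (hθ0 : ∀ j i, 0 ≤ θ j i)
    (hθsum : ∀ i, ∑ j ∈ Finset.range n, θ j i ≤ 1)
    (S : Finset ℕ)
    (K : Finset (ℕ × ℕ))
    (r : ℝ) (hr : 0 ≤ r)
    (hsmall : ∀ j i, j < n → i < n → (j, i) ∉ K → θ j i ≤ r)
    (θ' : ℕ → ℕ → ℝ)
    (hθ'0 : ∀ j i, 0 ≤ θ' j i)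
    (hθ'sum : ∀ i, ∑ j ∈ Finset.range n, θ' j i ≤ 1)
    (hθ'out : ∀ j i, (j, i) ∉ K → θ' j i = 0)
    (hθ'close : ∀ j i, (j, i) ∈ K → |θ' j i - θ j i| ≤ (n : ℝ) * r)
    (m m' : ℕ → ℝ)
    (hm : ∀ i, m i = if i = 0 ∨ i ∈ S then 1
      else ∑ j ∈ Finset.range i, θ j i * m j)
    (hm' : ∀ i, m' i = if i = 0 ∨ i ∈ S then 1
      else ∑ j ∈ Finset.range i, θ' j i * m' j) :
    ∀ i < n, |m i - m' i| ≤ (n : ℝ) ^ 2 * ((n : ℝ) + 1) * r := by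
  have hweights : ∀ j i, j < i → i < n → |θ j i - θ' j i| ≤ n * r := by
    intro j i hji hi
    by_cases hK : (j, i) ∈ K
    · exact abs_sub_comm (θ j i) (θ' j i) ▸ hθ'close j i hK
    · have hn : (1 : ℝ) ≤ n := by exact_mod_cast Nat.one_le_of_lt hi
      rw [hθ'out j i hK, sub_zero, abs_of_nonneg (hθ0 j i)]
      exact (hsmall j i (hji.trans hi) hi hK).trans (le_mul_of_one_le_left hr hn)
  intro i hi
  have hin : (i : ℝ) ≤ n := by exact_mod_cast hi.le
  calc |m i - m' i| ≤ i ^ 2 * (n * r) :=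
        IsInterventionalMean.abs_sub_le hθ0 hθsum hm hm'
          (IsInterventionalMean.mem_Icc hθ'0 hθ'sum hm') (by positivity) hweights i hi
    _ ≤ n ^ 2 * (n * r) := by gcongr
    _ ≤ n ^ 2 * (n + 1) * r := by nlinarith [sq_nonneg (n : ℝ)]

/-- Lemma 7 of the paper: the interventional mean of the estimated BLM `M'`
(with estimated edge set `K` and weights within `n·r` of the transformed true
weights, and zero weights outside `K`) differs from that of the true model `M`
(with weight matrix `θ`, whose edges outside `K` have weight at most `r`) by
at most `n²·(n+1)·r`.

Here `m` (resp. `m'`) is the interventional mean vector of the model with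
weight matrix `θ` (resp. `θ'`), characterized by the strong recursion
`m i = 1` if `i = 0` or `i ∈ S`, and `m i = ∑_{j<i} θ j i · m j` otherwise. -/
theorem blm_estimated_model_reward_close
    (n : ℕ) (hn : 1 ≤ n)
    (θ : ℕ → ℕ → ℝ)
    (hθ0 : ∀ j i, 0 ≤ θ j i)
    (hθtri : ∀ j i, ¬ j < i → θ j i = 0)
    (hθsum : ∀ i, ∑ j ∈ Finset.range n, θ j i ≤ 1)
    (S : Finset ℕ) (hS : ∀ s ∈ S, s < n)
    (K : Finset (ℕ × ℕ)) (hK : ∀ e ∈ K, e.1 < n ∧ e.2 < n)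
    (r : ℝ) (hr : 0 ≤ r)
    (hsmall : ∀ j i, j < n → i < n → (j, i) ∉ K → θ j i ≤ r)
    (θ' : ℕ → ℕ → ℝ)
    (hθ'0 : ∀ j i, 0 ≤ θ' j i)
    (hθ'tri : ∀ j i, ¬ j < i → θ' j i = 0)
    (hθ'sum : ∀ i, ∑ j ∈ Finset.range n, θ' j i ≤ 1)
    (hθ'out : ∀ j i, (j, i) ∉ K → θ' j i = 0)
    (hθ'close : ∀ j i, (j, i) ∈ K → |θ' j i - θ j i| ≤ (n : ℝ) * r)
    (m m' : ℕ → ℝ)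
    (hm : ∀ i, m i = if i = 0 ∨ i ∈ S then 1
      else ∑ j ∈ Finset.range i, θ j i * m j)
    (hm' : ∀ i, m' i = if i = 0 ∨ i ∈ S then 1
      else ∑ j ∈ Finset.range i, θ' j i * m' j) :
    ∀ i < n, |m i - m' i| ≤ (n : ℝ) ^ 2 * ((n : ℝ) + 1) * r :=
  blm_estimated_model_reward_close_general n θ hθ0 hθsum S K r hr hsmall θ' hθ'0 hθ'sum hθ'out
    hθ'close m m' hm hm'
end
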